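/- For every real z > 0, the limiting intensive free energy of adsorbing Dyck paths exists and equals F_D(z) = lim_{ν→∞} (1/(2ν))·log D_{2ν}(z) = log 2 if 0 < z ≤ 2, and F_D(z) = log z − (1/2)·log(z−1) if z > 2. -/

import Mathlib

open Filter Real

/-- Partition function of adsorbing Dyck paths of length `2ν`:
`D_{2ν}(z) = Σ_{m=0}^{ν} ((2m+1)/(ν+m+1))·C(2ν, ν+m)·(z−1)^m`. -/
noncomputable def Dp (ν : ℕ) (z : ℝ) : ℝ :=
  ∑ m ∈ Finset.range (ν + 1),
    ((2 * (m : ℝ) + 1) / ((ν : ℝ) + m + 1)) * (Nat.choose (2 * ν) (ν + m)) * (z - 1) ^ m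

/-- Partition function of adsorbing directed paths of length `2ν`:
`T_{2ν}(z) = Σ_{m=0}^{ν} C(2ν, ν+m)·(z−1)^m`. -/
noncomputable def Tp (ν : ℕ) (z : ℝ) : ℝ :=
  ∑ m ∈ Finset.range (ν + 1), (Nat.choose (2 * ν) (ν + m) : ℝ) * (z - 1) ^ m

/-- Pressure of an adsorbing Dyck path of length `n = 2ν` at the point `q = 2κ`:
`P_n^D(z;q) = log(1 − D_q(z)·D_{n−q}(z)/D_n(z))`. -/
noncomputable def PD (ν κ : ℕ) (z : ℝ) : ℝ :=
  Real.log (1 - Dp κ z * Dp (ν - κ) z / Dp ν z)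

/-- Pressure of an adsorbing directed path of length `n = 2ν` at the point `q = 2κ`:
`P_n^T(z;q) = log(1 − D_q(z)·T_{n−q}(z)/T_n(z))`. -/
noncomputable def PT (ν κ : ℕ) (z : ℝ) : ℝ :=
  Real.log (1 - Dp κ z * Tp (ν - κ) z / Tp ν z)

noncomputable def bb (ν m : ℕ) : ℝ :=
  ((2 * (m : ℝ) + 1) / ((ν : ℝ) + m + 1)) * (Nat.choose (2 * ν) (ν + m))

lemma choose_step (ν m : ℕ) (h : m ≤ ν) :
    ((ν : ℝ) + m + 1) * (Nat.choose (2 * ν) (ν + m + 1) : ℝ)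
      = ((ν : ℝ) - m) * (Nat.choose (2 * ν) (ν + m) : ℝ) := by
  have h1 := Nat.choose_succ_right_eq (2 * ν) (ν + m)
  have h2 : 2 * ν - (ν + m) = ν - m := by omega
  rw [h2] at h1
  have := congrArg (Nat.cast : ℕ → ℝ) h1
  push_cast [Nat.cast_sub h] at this
  linarith [this]

lemma coef_eq (ν m : ℕ) (h : m ≤ ν) :
    bb ν m = (Nat.choose (2 * ν) (ν + m) : ℝ) - (Nat.choose (2 * ν) (ν + m + 1) : ℝ) := by
  have hpos : (0:ℝ) < (ν : ℝ) + m + 1 := by positivity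
  have hs := choose_step ν m h
  rw [bb, div_mul_eq_mul_div, div_eq_iff (ne_of_gt hpos)]
  have hm : (m : ℝ) ≤ ν := by exact_mod_cast h
  nlinarith [hs]

lemma bb_le_choose (ν m : ℕ) (h : m ≤ ν) : bb ν m ≤ (Nat.choose (2 * ν) (ν + m) : ℝ) := by
  rw [bb]
  have hm : (m : ℝ) ≤ ν := by exact_mod_cast h
  have h1 : (2 * (m:ℝ) + 1) / ((ν : ℝ) + m + 1) ≤ 1 := by
    rw [div_le_one (by positivity)]; linarith
  have hC0 : (0:ℝ) ≤ (Nat.choose (2*ν) (ν+m) : ℝ) := Nat.cast_nonneg _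
  nlinarith

lemma bb_ratio (ν m : ℕ) : bb ν (m + 1) ≤ 3 * bb ν m := by
  have hB0 : (0:ℝ) ≤ bb ν (m+1) := by
    apply mul_nonneg (div_nonneg (by positivity) (by positivity)) (by positivity)
  rcases le_or_gt (m + 1) ν with h | h
  · have hm : m ≤ ν := le_trans (Nat.le_succ m) h
    have hs := choose_step ν m hm
    have hmr : (m : ℝ) ≤ ν := by exact_mod_cast hm
    set A := (Nat.choose (2 * ν) (ν + m) : ℝ) with hA
    set B := (Nat.choose (2 * ν) (ν + m + 1) : ℝ) with hB
    have hC0 : (0:ℝ) ≤ A := Nat.cast_nonneg _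
    have hp1 : (0:ℝ) < (ν:ℝ) + m + 1 := by positivity
    have hp2 : (0:ℝ) < (ν:ℝ) + (m+1) + 1 := by positivity
    have he : ν + (m + 1) = ν + m + 1 := by ring
    rw [bb, bb, he, ← hA, ← hB]
    push_cast
    rw [div_mul_eq_mul_div, div_mul_eq_mul_div, ← mul_div_assoc,
      div_le_div_iff₀ (by positivity) hp1]
    have key : (2*((m:ℝ)+1)+1)*B*((ν:ℝ)+m+1) = (2*(m:ℝ)+3)*(((ν:ℝ)-m)*A) := by
      rw [mul_assoc, mul_comm B, hs]; ring
    rw [key]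
    have h5 : (2*(m:ℝ)+3)*((ν:ℝ)-(m:ℝ)) ≤ 3*(2*(m:ℝ)+1)*((ν:ℝ)+((m:ℝ)+1)+1) := by nlinarith
    nlinarith [mul_le_mul_of_nonneg_right h5 hC0]
  · have hz : Nat.choose (2 * ν) (ν + (m + 1)) = 0 := Nat.choose_eq_zero_of_lt (by omega)
    have hbb : bb ν (m+1) = 0 := by rw [bb, hz]; simp
    rw [hbb]
    have : (0:ℝ) ≤ bb ν m := by
      apply mul_nonneg (div_nonneg (by positivity) (by positivity)) (by positivity)
    linarith

lemma coef_eq' (ν m : ℕ) (h : m ≤ ν) :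
    ((2 * (m : ℝ) + 1) / ((ν : ℝ) + m + 1)) * (Nat.choose (2 * ν) (ν + m))
      = (Nat.choose (2 * ν) (ν + m) : ℝ) - (Nat.choose (2 * ν) (ν + m + 1) : ℝ) :=
  coef_eq ν m h

lemma bb_nonneg (ν m : ℕ) : 0 ≤ bb ν m :=
  mul_nonneg (div_nonneg (by positivity) (by positivity)) (by positivity)

lemma Dp_eq_sum (ν : ℕ) (z : ℝ) :
    Dp ν z = ∑ m ∈ Finset.range (ν + 1),
      ((Nat.choose (2 * ν) (ν + m) : ℝ) - (Nat.choose (2 * ν) (ν + m + 1) : ℝ)) * (z - 1) ^ m := by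
  apply Finset.sum_congr rfl
  intro m hm
  rw [coef_eq' ν m (Nat.lt_succ_iff.mp (Finset.mem_range.mp hm))]

lemma Tp_sum_shift1 (ν : ℕ) (z : ℝ) :
    ∑ k ∈ Finset.range (ν + 1), (Nat.choose (2 * ν) (ν + (k + 1)) : ℝ) * (z - 1) ^ (k + 1)
      = Tp ν z - (Nat.choose (2 * ν) ν : ℝ) := by
  set g : ℕ → ℝ := fun m => (Nat.choose (2 * ν) (ν + m) : ℝ) * (z - 1) ^ m with hg
  have h1 := Finset.sum_range_succ' g (ν + 1)
  have h2 : ∑ k ∈ Finset.range (ν + 2), g k = ∑ k ∈ Finset.range (ν + 1), g k + g (ν + 1) :=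
    Finset.sum_range_succ g (ν + 1)
  have h3 : g (ν + 1) = 0 := by
    simp only [hg]
    rw [Nat.choose_eq_zero_of_lt (by omega)]
    simp
  have h4 : g 0 = (Nat.choose (2 * ν) ν : ℝ) := by simp [hg]
  have h5 : ∑ k ∈ Finset.range (ν + 1), g k = Tp ν z := rfl
  have goal : ∑ k ∈ Finset.range (ν + 1), g (k + 1) = Tp ν z - (Nat.choose (2 * ν) ν : ℝ) := by
    rw [h3] at h2; rw [h5] at h2; rw [h2, h4] at h1; linarith
  exact goal

lemma Tp_sum_shift2 (ν : ℕ) (z : ℝ) :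
    ∑ k ∈ Finset.range (ν + 1), (Nat.choose (2 * ν) (ν + (k + 2)) : ℝ) * (z - 1) ^ (k + 2)
      = Tp ν z - (Nat.choose (2 * ν) ν : ℝ)
        - (Nat.choose (2 * ν) (ν + 1) : ℝ) * (z - 1) := by
  set g : ℕ → ℝ := fun m => (Nat.choose (2 * ν) (ν + m) : ℝ) * (z - 1) ^ m with hg
  set h : ℕ → ℝ := fun m => g (m + 1) with hh
  have h1 := Finset.sum_range_succ' h (ν + 1)
  -- ∑_{range(ν+2)} h = ∑_{range(ν+1)} h (k+1) + h 0
  have h2 := Finset.sum_range_succ' g (ν + 2)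
  -- ∑_{range(ν+3)} g = ∑_{range(ν+2)} g (k+1) + g 0
  have h3 : ∑ k ∈ Finset.range (ν + 3), g k = Tp ν z := by
    rw [Finset.sum_range_succ, Finset.sum_range_succ]
    have z1 : g (ν + 1) = 0 := by
      simp only [hg]; rw [Nat.choose_eq_zero_of_lt (by omega)]; simp
    have z2 : g (ν + 2) = 0 := by
      simp only [hg]; rw [Nat.choose_eq_zero_of_lt (by omega)]; simp
    rw [z1, z2]
    show Tp ν z + 0 + 0 = Tp ν z
    ring
  have h4 : g 0 = (Nat.choose (2 * ν) ν : ℝ) := by simp [hg]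
  have h5 : h 0 = (Nat.choose (2 * ν) (ν + 1) : ℝ) * (z - 1) := by simp [hh, hg]
  have key : ∑ k ∈ Finset.range (ν + 1), h (k + 1)
      = Tp ν z - (Nat.choose (2 * ν) ν : ℝ) - (Nat.choose (2 * ν) (ν + 1) : ℝ) * (z - 1) := by
    have e1 : ∑ k ∈ Finset.range (ν + 2), h k = ∑ k ∈ Finset.range (ν + 2), g (k + 1) := rfl
    rw [e1] at h1
    rw [h3, h4] at h2
    rw [h5] at h1
    linarith
  exact key

lemma DT (ν : ℕ) (z : ℝ) :
    (z - 1) * Dp ν z = (z - 2) * Tp ν z + (Nat.choose (2 * ν) ν : ℝ) := by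
  rw [Dp_eq_sum, Finset.mul_sum]
  have step : ∀ m ∈ Finset.range (ν + 1),
      (z - 1) * (((Nat.choose (2 * ν) (ν + m) : ℝ) - (Nat.choose (2 * ν) (ν + m + 1) : ℝ))
        * (z - 1) ^ m)
      = (z - 1) * ((Nat.choose (2 * ν) (ν + m) : ℝ) * (z - 1) ^ m)
        - (Nat.choose (2 * ν) (ν + (m + 1)) : ℝ) * (z - 1) ^ (m + 1) := by
    intro m _
    have : ν + (m + 1) = ν + m + 1 := by ring
    rw [this]; ring
  rw [Finset.sum_congr rfl step, Finset.sum_sub_distrib, ← Finset.mul_sum]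
  have e : ∑ m ∈ Finset.range (ν + 1), (Nat.choose (2 * ν) (ν + m) : ℝ) * (z - 1) ^ m
      = Tp ν z := rfl
  rw [e, Tp_sum_shift1]
  ring

lemma central_pascal (ν : ℕ) :
    (Nat.choose (2 * (ν + 1)) (ν + 1) : ℝ)
      = 2 * (Nat.choose (2 * ν) ν : ℝ) + 2 * (Nat.choose (2 * ν) (ν + 1) : ℝ) := by
  have e1 : 2 * (ν + 1) = (2 * ν + 1) + 1 := by ring
  have h1 : Nat.choose (2 * ν + 1 + 1) (ν + 1)
      = Nat.choose (2 * ν + 1) ν + Nat.choose (2 * ν + 1) (ν + 1) :=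
    Nat.choose_succ_succ' (2 * ν + 1) ν
  have h2 : Nat.choose (2 * ν + 1) ν = Nat.choose (2 * ν + 1) (ν + 1) := by
    have hsym := Nat.choose_symm (show ν + 1 ≤ 2 * ν + 1 by omega)
    have e : 2 * ν + 1 - (ν + 1) = ν := by omega
    rw [e] at hsym
    exact hsym
  have h3 : Nat.choose (2 * ν + 1) (ν + 1)
      = Nat.choose (2 * ν) ν + Nat.choose (2 * ν) (ν + 1) :=
    Nat.choose_succ_succ' (2 * ν) ν
  rw [e1, h1, h2, h3]
  push_cast
  ring

lemma pascal2 (n j : ℕ) :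
    (Nat.choose (n + 2) (j + 2) : ℝ)
      = (Nat.choose n j : ℝ) + 2 * (Nat.choose n (j + 1) : ℝ)
        + (Nat.choose n (j + 2) : ℝ) := by
  have h1 := Nat.choose_succ_succ' (n + 1) (j + 1)
  have h2 := Nat.choose_succ_succ' n j
  have h3 := Nat.choose_succ_succ' n (j + 1)
  have e1 : n + 1 + 1 = n + 2 := rfl
  have e2 : j + 1 + 1 = j + 2 := rfl
  rw [e1, e2] at h1
  rw [e2] at h3
  have : Nat.choose (n+2) (j+2) = Nat.choose n j + 2 * Nat.choose n (j+1) + Nat.choose n (j+2) := by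
    omega
  rw [this]; push_cast; ring

lemma Tp_rec (ν : ℕ) (z : ℝ) :
    (z - 1) * Tp (ν + 1) z
      = z ^ 2 * Tp ν z + (z - 1) * (Nat.choose (2 * ν) (ν + 1) : ℝ)
        - (Nat.choose (2 * ν) ν : ℝ) := by
  set F : ℕ → ℝ := fun m => (Nat.choose (2 * (ν + 1)) ((ν + 1) + m) : ℝ) * (z - 1) ^ m with hF
  have hTp : Tp (ν + 1) z = ∑ k ∈ Finset.range (ν + 1), F (k + 1) + F 0 :=
    Finset.sum_range_succ' F (ν + 1)
  have hF0 : F 0 = (Nat.choose (2 * (ν + 1)) (ν + 1) : ℝ) := by simp [hF]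
  have hFk : ∀ k, F (k + 1)
      = ((Nat.choose (2 * ν) (ν + k) : ℝ) + 2 * (Nat.choose (2 * ν) (ν + (k + 1)) : ℝ)
          + (Nat.choose (2 * ν) (ν + (k + 2)) : ℝ)) * (z - 1) ^ (k + 1) := by
    intro k
    have e1 : 2 * (ν + 1) = 2 * ν + 2 := by ring
    have e2 : (ν + 1) + (k + 1) = (ν + k) + 2 := by ring
    have e3 : ν + (k + 1) = (ν + k) + 1 := by ring
    have e4 : ν + (k + 2) = (ν + k) + 2 := by ring
    simp only [hF, e1, e2, e3, e4]
    rw [pascal2 (2 * ν) (ν + k)]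
  have expand : ∀ k ∈ Finset.range (ν + 1), (z - 1) * F (k + 1)
      = (z - 1) ^ 2 * ((Nat.choose (2 * ν) (ν + k) : ℝ) * (z - 1) ^ k)
        + 2 * (z - 1) * ((Nat.choose (2 * ν) (ν + (k + 1)) : ℝ) * (z - 1) ^ (k + 1))
        + (Nat.choose (2 * ν) (ν + (k + 2)) : ℝ) * (z - 1) ^ (k + 2) := by
    intro k _
    rw [hFk k]; ring
  have main : (z - 1) * Tp (ν + 1) z
      = (z - 1) ^ 2 * Tp ν z
        + 2 * (z - 1) * (Tp ν z - (Nat.choose (2 * ν) ν : ℝ))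
        + (Tp ν z - (Nat.choose (2 * ν) ν : ℝ) - (Nat.choose (2 * ν) (ν + 1) : ℝ) * (z - 1))
        + (z - 1) * (Nat.choose (2 * (ν + 1)) (ν + 1) : ℝ) := by
    rw [hTp, mul_add, hF0, Finset.mul_sum, Finset.sum_congr rfl expand]
    rw [Finset.sum_add_distrib, Finset.sum_add_distrib, ← Finset.mul_sum, ← Finset.mul_sum]
    rw [Tp_sum_shift1, Tp_sum_shift2]
    have e : ∑ k ∈ Finset.range (ν + 1), (Nat.choose (2 * ν) (ν + k) : ℝ) * (z - 1) ^ k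
        = Tp ν z := rfl
    rw [e]
  rw [main, central_pascal ν]
  ring

lemma Dp_rec (ν : ℕ) (z : ℝ) (hz : z ≠ 1) :
    (z - 1) * Dp (ν + 1) z
      = z ^ 2 * Dp ν z - z * ((Nat.choose (2 * ν) ν : ℝ) - (Nat.choose (2 * ν) (ν + 1) : ℝ)) := by
  have h1 := DT (ν + 1) z
  have h2 := DT ν z
  have h3 := Tp_rec ν z
  have h4 := central_pascal ν
  have hzz : z - 1 ≠ 0 := sub_ne_zero.mpr hz
  apply mul_left_cancel₀ hzz
  linear_combination (z - 1) * h1 + (z - 2) * h3 - z ^ 2 * h2 + (z - 1) * h4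

lemma Dp_def' (ν : ℕ) (z : ℝ) :
    Dp ν z = ∑ m ∈ Finset.range (ν + 1), bb ν m * (z - 1) ^ m := rfl

noncomputable def KK (ν : ℕ) : ℝ := (Nat.choose (2 * ν) ν : ℝ) / ((ν : ℝ) + 1)

lemma KK_pos (ν : ℕ) : 0 < KK ν := by
  apply div_pos _ (by positivity)
  exact_mod_cast Nat.choose_pos (by omega)

lemma bb_zero (ν : ℕ) : bb ν 0 = KK ν := by
  rw [bb, KK]
  norm_num
  rw [inv_mul_eq_div]

lemma KK_eq (ν : ℕ) :
    KK ν = (Nat.choose (2 * ν) ν : ℝ) - (Nat.choose (2 * ν) (ν + 1) : ℝ) := by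
  have := coef_eq ν 0 (Nat.zero_le ν)
  rw [bb_zero] at this
  simpa using this

lemma cb_cast (ν : ℕ) : (Nat.centralBinom ν : ℝ) = (Nat.choose (2 * ν) ν : ℝ) := rfl

lemma KK_ratio (ν : ℕ) (h : 1 ≤ ν) : 2 * KK ν ≤ KK (ν + 1) ∧ KK (ν + 1) ≤ 4 * KK ν := by
  have hid := Nat.succ_mul_centralBinom_succ ν
  simp only [Nat.centralBinom_eq_two_mul_choose] at hid
  have hidR : ((ν : ℝ) + 1) * (Nat.choose (2 * (ν + 1)) (ν + 1) : ℝ)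
      = 2 * (2 * (ν : ℝ) + 1) * (Nat.choose (2 * ν) ν : ℝ) := by
    have := congrArg (Nat.cast : ℕ → ℝ) hid
    push_cast at this
    convert this using 2 <;> push_cast <;> ring
  have hCpos : (0:ℝ) < (Nat.choose (2 * ν) ν : ℝ) := by
    exact_mod_cast Nat.choose_pos (by omega)
  have hνr : (1:ℝ) ≤ (ν : ℝ) := by exact_mod_cast h
  have hK1 : KK ν * ((ν:ℝ) + 1) = (Nat.choose (2 * ν) ν : ℝ) :=
    div_mul_cancel₀ _ (by positivity)
  have hK2 : KK (ν + 1) * ((ν:ℝ) + 2) = (Nat.choose (2 * (ν + 1)) (ν + 1) : ℝ) := by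
    rw [KK]
    have e : ((ν + 1 : ℕ):ℝ) + 1 = (ν:ℝ) + 2 := by push_cast; ring
    rw [e]
    exact div_mul_cancel₀ _ (by positivity)
  have hKpos := KK_pos ν
  have hKpos' := KK_pos (ν + 1)
  have hkey : ((ν:ℝ)+1) * (KK (ν+1) * ((ν:ℝ)+2)) = ((ν:ℝ)+1) * (2*(2*(ν:ℝ)+1) * KK ν) := by
    linear_combination ((ν:ℝ)+1)*hK2 + hidR - 2*(2*(ν:ℝ)+1)*hK1
  have hkey2 : KK (ν+1) * ((ν:ℝ)+2) = 2*(2*(ν:ℝ)+1) * KK ν :=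
    mul_left_cancel₀ (by positivity) hkey
  constructor
  · nlinarith [hkey2, hKpos, hKpos', hνr]
  · nlinarith [hkey2, hKpos, hKpos', hνr]

lemma KK_lower (ν : ℕ) : 4 ^ ν / (2 * ((ν:ℝ) + 1) ^ 2) ≤ KK ν := by
  rcases Nat.eq_zero_or_pos ν with h | h
  · subst h; rw [KK]; norm_num
  · have hnat := Nat.four_pow_le_two_mul_self_mul_centralBinom ν h
    have hR : (4:ℝ) ^ ν ≤ 2 * (ν:ℝ) * (Nat.choose (2 * ν) ν : ℝ) := by
      exact_mod_cast hnat
    rw [KK, div_le_div_iff₀ (by positivity) (by positivity)]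
    have hν1 : (1:ℝ) ≤ (ν:ℝ) := by exact_mod_cast h
    have hC0 : (0:ℝ) ≤ (Nat.choose (2 * ν) ν : ℝ) := Nat.cast_nonneg _
    nlinarith [hR, pow_pos (show (0:ℝ) < 4 by norm_num) ν]

lemma alt_nonneg (a : ℕ → ℝ) (ha : ∀ k, 0 ≤ a k) (hmono : ∀ k, a (k + 1) ≤ a k) (n : ℕ) :
    0 ≤ ∑ m ∈ Finset.range n, (-1 : ℝ) ^ m * a m := by
  have even_case : ∀ k, 0 ≤ ∑ m ∈ Finset.range (2 * k), (-1 : ℝ) ^ m * a m := by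
    intro k
    induction k with
    | zero => simp
    | succ k ih =>
      have e : 2 * (k + 1) = 2 * k + 1 + 1 := by ring
      rw [e, Finset.sum_range_succ, Finset.sum_range_succ]
      have h1 : ((-1:ℝ)) ^ (2 * k) = 1 := by
        rw [pow_mul]; norm_num
      have h2 : ((-1:ℝ)) ^ (2 * k + 1) = -1 := by
        rw [pow_succ, h1]; norm_num
      rw [h1, h2]
      have := hmono (2 * k)
      nlinarith [ih]
  rcases Nat.even_or_odd n with ⟨k, hk⟩ | ⟨k, hk⟩
  · subst hk
    have : k + k = 2 * k := by ring
    rw [this]; exact even_case k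
  · subst hk
    rw [Finset.sum_range_succ]
    have h1 : ((-1:ℝ)) ^ (2 * k) = 1 := by rw [pow_mul]; norm_num
    rw [h1]
    have := even_case k
    have := ha (2 * k)
    linarith

lemma sum_upper_choose (ν : ℕ) :
    ∑ m ∈ Finset.range (ν + 1), (Nat.choose (2 * ν) (ν + m) : ℝ) ≤ 4 ^ ν := by
  have hnat : ∑ m ∈ Finset.range (ν + 1), Nat.choose (2 * ν) (ν + m) ≤ 4 ^ ν := by
    have hsplit := Finset.sum_range_add (fun k => Nat.choose (2 * ν) k) ν (ν + 1)
    have hall : ∑ x ∈ Finset.range (ν + (ν + 1)), Nat.choose (2 * ν) x = 2 ^ (2 * ν) := by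
      have e : ν + (ν + 1) = 2 * ν + 1 := by ring
      rw [e]
      exact Nat.sum_range_choose (2 * ν)
    have e4 : (4:ℕ) ^ ν = 2 ^ (2 * ν) := by
      norm_num [pow_mul]
    omega
  calc ∑ m ∈ Finset.range (ν + 1), (Nat.choose (2 * ν) (ν + m) : ℝ)
      = ((∑ m ∈ Finset.range (ν + 1), Nat.choose (2 * ν) (ν + m) : ℕ) : ℝ) := by push_cast; rfl
    _ ≤ ((4 ^ ν : ℕ) : ℝ) := by exact_mod_cast hnat
    _ = 4 ^ ν := by push_cast; rfl

lemma Dp_upper (ν : ℕ) (z : ℝ) (h1 : 0 ≤ z) (h2 : z ≤ 2) : Dp ν z ≤ 4 ^ ν := by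
  rw [Dp_def']
  calc ∑ m ∈ Finset.range (ν + 1), bb ν m * (z - 1) ^ m
      ≤ ∑ m ∈ Finset.range (ν + 1), (Nat.choose (2 * ν) (ν + m) : ℝ) := by
        apply Finset.sum_le_sum
        intro m hm
        have hmν : m ≤ ν := Nat.lt_succ_iff.mp (Finset.mem_range.mp hm)
        have hb := bb_nonneg ν m
        have habs : (z - 1) ^ m ≤ 1 := by
          calc (z - 1) ^ m ≤ |(z - 1) ^ m| := le_abs_self _
            _ = |z - 1| ^ m := by rw [abs_pow]
            _ ≤ 1 ^ m := pow_le_pow_left₀ (abs_nonneg _) (abs_le.mpr ⟨by linarith, by linarith⟩) m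
            _ = 1 := one_pow m
        calc bb ν m * (z - 1) ^ m ≤ bb ν m * 1 := by
              apply mul_le_mul_of_nonneg_left habs hb
          _ = bb ν m := mul_one _
          _ ≤ (Nat.choose (2 * ν) (ν + m) : ℝ) := bb_le_choose ν m hmν
    _ ≤ 4 ^ ν := sum_upper_choose ν

lemma Dp_lower_mid (ν : ℕ) (z : ℝ) (h1 : 1 ≤ z) (h2 : z ≤ 2) : KK ν ≤ Dp ν z := by
  rw [Dp_def', Finset.sum_range_succ' (fun m => bb ν m * (z - 1) ^ m) ν]
  have h0 : bb ν 0 * (z - 1) ^ 0 = KK ν := by rw [bb_zero]; simp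
  rw [h0]
  have : 0 ≤ ∑ k ∈ Finset.range ν, bb ν (k + 1) * (z - 1) ^ (k + 1) := by
    apply Finset.sum_nonneg
    intro k _
    exact mul_nonneg (bb_nonneg ν (k + 1)) (pow_nonneg (by linarith) _)
  linarith

lemma Dp_lower_pair (ν : ℕ) (z : ℝ) (h1 : 2/3 < z) (h2 : z ≤ 1) :
    (3 * z - 2) * KK ν ≤ Dp ν z := by
  set s : ℝ := 1 - z with hs
  have hs0 : 0 ≤ s := by simp [hs]; linarith
  have hs3 : 3 * s < 1 := by simp [hs]; linarith
  set a : ℕ → ℝ := fun m => bb ν m * s ^ m with ha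
  have ha0 : ∀ k, 0 ≤ a k := fun k =>
    mul_nonneg (bb_nonneg ν k) (pow_nonneg hs0 k)
  have hmono : ∀ k, a (k + 1) ≤ a k := by
    intro k
    simp only [ha]
    have h3 := bb_ratio ν k
    have hb0 := bb_nonneg ν k
    have hsp : 0 ≤ s ^ k := pow_nonneg hs0 k
    calc bb ν (k+1) * s ^ (k+1) = (bb ν (k+1) * s) * s ^ k := by ring
      _ ≤ (3 * bb ν k * s) * s ^ k := by
          apply mul_le_mul_of_nonneg_right _ hsp
          apply mul_le_mul_of_nonneg_right h3 hs0
      _ = (3 * s) * (bb ν k * s ^ k) := by ring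
      _ ≤ 1 * (bb ν k * s ^ k) := by
          apply mul_le_mul_of_nonneg_right (le_of_lt hs3) (mul_nonneg hb0 hsp)
      _ = bb ν k * s ^ k := one_mul _
  have hDp : Dp ν z = ∑ m ∈ Finset.range (ν + 1), (-1 : ℝ) ^ m * a m := by
    rw [Dp_def']
    apply Finset.sum_congr rfl
    intro m _
    have : z - 1 = -s := by rw [hs]; ring
    rw [this, neg_pow]
    simp only [ha]
    ring
  rw [hDp]
  rcases Nat.eq_zero_or_pos ν with hν | hν
  · subst hν
    rw [Finset.sum_range_one]
    have h00 : (-1:ℝ)^0 * a 0 = KK 0 := by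
      simp only [pow_zero, one_mul, ha]
      rw [mul_one]
      exact bb_zero 0
    rw [h00]
    nlinarith [KK_pos 0]
  · -- ν ≥ 1 : sum = a0 - a1 + shifted alternating sum
    obtain ⟨k, hk⟩ : ∃ k, ν = k + 1 := ⟨ν - 1, by omega⟩
    subst hk
    have e1 := Finset.sum_range_succ' (fun m => (-1:ℝ)^m * a m) (k + 1)
    have e2 := Finset.sum_range_succ' (fun m => (-1:ℝ)^(m+1) * a (m+1)) k
    rw [e1, e2]
    have shift : ∀ i, (-1:ℝ) ^ (i + 1 + 1) * a (i + 1 + 1) = (-1:ℝ)^i * a (i + 2) := by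
      intro i
      have : (-1:ℝ) ^ (i + 1 + 1) = (-1:ℝ)^i := by
        rw [pow_succ, pow_succ]; ring
      rw [this]
    simp only [shift]
    have halt : 0 ≤ ∑ i ∈ Finset.range k, (-1:ℝ)^i * a (i + 2) :=
      alt_nonneg (fun i => a (i + 2)) (fun i => ha0 (i+2)) (fun i => hmono (i+2)) k
    have hterm : (-1:ℝ)^(0+1) * a (0+1) + (-1:ℝ)^0 * a 0 = a 0 - a 1 := by
      norm_num
      ring
    have hlow : (3 * z - 2) * KK (k+1) ≤ a 0 - a 1 := by
      have ha0v : a 0 = KK (k+1) := by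
        simp only [ha]
        rw [pow_zero, mul_one, bb_zero]
      have hr := bb_ratio (k+1) 0
      have ha1 : a 1 ≤ 3 * s * KK (k+1) := by
        have : a 1 = bb (k+1) 1 * s := by simp [ha]
        rw [this]
        have hb0 : bb (k+1) 0 = KK (k+1) := bb_zero (k+1)
        nlinarith [bb_nonneg (k+1) 1, KK_pos (k+1)]
      rw [ha0v]
      have : 3 * z - 2 = 1 - 3 * s := by rw [hs]; ring
      rw [this]
      nlinarith [KK_pos (k+1)]
    norm_num
    norm_num at halt hterm
    linarith

lemma Dp_one (z : ℝ) : Dp 1 z = z := by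
  rw [Dp]
  rw [Finset.sum_range_succ, Finset.sum_range_one]
  norm_num [Nat.choose]

lemma KK_one : KK 1 = 1 := by
  rw [KK]
  norm_num [Nat.choose]

lemma Dp_lower_small (ν : ℕ) (z : ℝ) (h1 : 0 < z) (h2 : z ≤ 7/10) (hν : 1 ≤ ν) :
    z * (1 - (5/4) * z) / (4 * (1 - z)) * KK ν ≤ Dp ν z
      ∧ Dp ν z ≤ (5/4) * KK ν := by
  set A := z * (1 - (5/4) * z) / (4 * (1 - z)) with hA
  have h1z : 0 < 1 - z := by linarith
  have hzne : z ≠ 1 := by intro h; rw [h] at h2; norm_num at h2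
  have hApos : 0 ≤ A := by
    apply div_nonneg _ (by linarith)
    nlinarith
  have hA4 : 4 * A * (1 - z) = z * (1 - (5/4) * z) := by
    rw [hA]; field_simp
  induction ν, hν using Nat.le_induction with
  | base =>
    rw [Dp_one, KK_one]
    constructor
    · nlinarith
    · nlinarith
  | succ n hn ih =>
    obtain ⟨ihl, ihu⟩ := ih
    have hrec := Dp_rec n z hzne
    rw [← KK_eq n] at hrec
    obtain ⟨hr1, hr2⟩ := KK_ratio n hn
    have hKp := KK_pos n
    have hKp' := KK_pos (n + 1)
    have hDn0 : 0 ≤ Dp n z := le_trans (mul_nonneg hApos hKp.le) ihl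
    have hub : z ^ 2 * Dp n z ≤ z ^ 2 * ((5/4) * KK n) :=
      mul_le_mul_of_nonneg_left ihu (sq_nonneg z)
    have hlb : 0 ≤ z ^ 2 * Dp n z := mul_nonneg (sq_nonneg z) hDn0
    constructor
    · -- lower bound
      have key : (1 - z) * (A * KK (n+1)) ≤ (1 - z) * Dp (n+1) z := by
        have e1 : (1 - z) * Dp (n+1) z = z * KK n - z ^ 2 * Dp n z := by linarith [hrec]
        have e2 : (1 - z) * (A * KK (n+1)) ≤ (1 - z) * (A * (4 * KK n)) := by
          apply mul_le_mul_of_nonneg_left _ h1z.le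
          exact mul_le_mul_of_nonneg_left hr2 hApos
        have e3 : (1 - z) * (A * (4 * KK n)) = z * (1 - (5/4) * z) * KK n := by
          nlinarith [hA4]
        nlinarith [hub]
      exact le_of_mul_le_mul_left key h1z
    · -- upper bound
      have key : (1 - z) * Dp (n+1) z ≤ (1 - z) * ((5/4) * KK (n+1)) := by
        have e1 : (1 - z) * Dp (n+1) z = z * KK n - z ^ 2 * Dp n z := by linarith [hrec]
        have e4 : z * KK n ≤ (5/2) * (1 - z) * KK n := by nlinarith [hKp]
        have e5 : (1 - z) * (2 * KK n) ≤ (1 - z) * KK (n+1) :=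
          mul_le_mul_of_nonneg_left hr1 h1z.le
        nlinarith [hlb]
      exact le_of_mul_le_mul_left key h1z

lemma choose_le_four_pow (ν : ℕ) : (Nat.choose (2 * ν) ν : ℝ) ≤ 4 ^ ν := by
  have h := sum_upper_choose ν
  have h0 : (Nat.choose (2 * ν) ν : ℝ)
      ≤ ∑ m ∈ Finset.range (ν + 1), (Nat.choose (2 * ν) (ν + m) : ℝ) := by
    have := Finset.single_le_sum (f := fun m => (Nat.choose (2 * ν) (ν + m) : ℝ))
      (fun i _ => Nat.cast_nonneg _) (Finset.mem_range.mpr (Nat.succ_pos ν))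
    simpa using this
  linarith

lemma Tp_bounds (ν : ℕ) (z : ℝ) (hz : 2 < z) :
    (z ^ 2 / (z - 1)) ^ ν ≤ 2 * Tp ν z ∧ Tp ν z ≤ (z ^ 2 / (z - 1)) ^ ν := by
  set t : ℝ := z - 1 with ht
  have ht1 : 1 < t := by rw [ht]; linarith
  have ht0 : 0 < t := by linarith
  set f : ℕ → ℝ := fun k => (Nat.choose (2 * ν) k : ℝ) * t ^ k with hf
  have hf0 : ∀ k, 0 ≤ f k := fun k => mul_nonneg (Nat.cast_nonneg _) (pow_nonneg ht0.le k)
  have hpow : ((t + 1) ^ (2 * ν) : ℝ) = ∑ k ∈ Finset.range (2 * ν + 1), f k := by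
    rw [add_pow]
    apply Finset.sum_congr rfl
    intro k _
    rw [hf]
    simp
    ring
  have hsplit : ∑ k ∈ Finset.range (2 * ν + 1), f k
      = ∑ k ∈ Finset.range ν, f k + ∑ x ∈ Finset.range (ν + 1), f (ν + x) := by
    have e : 2 * ν + 1 = ν + (ν + 1) := by ring
    rw [e]
    exact Finset.sum_range_add f ν (ν + 1)
  have hhigh : ∑ x ∈ Finset.range (ν + 1), f (ν + x) = t ^ ν * Tp ν z := by
    rw [Tp, Finset.mul_sum]
    apply Finset.sum_congr rfl
    intro x _
    simp only [hf, ht]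
    rw [pow_add]
    ring
  have hz1 : z = t + 1 := by rw [ht]; ring
  have hQpow : (z ^ 2 / (z - 1)) ^ ν = (t + 1) ^ (2 * ν) / t ^ ν := by
    rw [div_pow, ← ht, ← hz1, ← pow_mul]
  have htν : (0:ℝ) < t ^ ν := pow_pos ht0 ν
  constructor
  · -- lower: Q^ν ≤ 2 Tp
    have hlow_le : ∑ k ∈ Finset.range ν, f k ≤ t ^ ν * Tp ν z := by
      have hreflect : ∑ k ∈ Finset.range ν, f k
          = ∑ j ∈ Finset.range ν, f (ν - 1 - j) := (Finset.sum_range_reflect f ν).symm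
      rw [hreflect]
      calc ∑ j ∈ Finset.range ν, f (ν - 1 - j)
          ≤ ∑ j ∈ Finset.range ν, f (ν + 1 + j) := by
            apply Finset.sum_le_sum
            intro j hj
            have hjν : j < ν := Finset.mem_range.mp hj
            rw [hf]
            simp only []
            have hch : Nat.choose (2 * ν) (ν - 1 - j) = Nat.choose (2 * ν) (ν + 1 + j) := by
              have hle : ν + 1 + j ≤ 2 * ν := by omega
              have := Nat.choose_symm hle
              have e : 2 * ν - (ν + 1 + j) = ν - 1 - j := by omega
              rw [e] at this
              exact this
            rw [hch]
            apply mul_le_mul_of_nonneg_left _ (Nat.cast_nonneg _)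
            exact pow_le_pow_right₀ ht1.le (by omega)
        _ ≤ ∑ x ∈ Finset.range (ν + 1), f (ν + x) := by
            rw [Finset.sum_range_succ' (fun x => f (ν + x)) ν]
            have e : ∀ j, ν + (j + 1) = ν + 1 + j := by intro j; ring
            have hsum : ∑ j ∈ Finset.range ν, f (ν + (j + 1))
                = ∑ j ∈ Finset.range ν, f (ν + 1 + j) := by
              apply Finset.sum_congr rfl
              intro j _
              rw [e j]
            rw [hsum]
            have : 0 ≤ f (ν + 0) := hf0 _
            linarith
        _ = t ^ ν * Tp ν z := hhigh
    have hfull : (t + 1) ^ (2 * ν) ≤ 2 * (t ^ ν * Tp ν z) := by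
      rw [hpow, hsplit, hhigh]
      linarith
    rw [hQpow, div_le_iff₀ htν]
    calc (t + 1) ^ (2 * ν) ≤ 2 * (t ^ ν * Tp ν z) := hfull
      _ = 2 * Tp ν z * t ^ ν := by ring
  · -- upper
    have : t ^ ν * Tp ν z ≤ (t + 1) ^ (2 * ν) := by
      rw [hpow, hsplit, hhigh]
      have : 0 ≤ ∑ k ∈ Finset.range ν, f k := Finset.sum_nonneg (fun k _ => hf0 k)
      linarith
    rw [hQpow, le_div_iff₀ htν]
    calc Tp ν z * t ^ ν = t ^ ν * Tp ν z := by ring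
      _ ≤ (t + 1) ^ (2 * ν) := this

lemma tendsto_log_nat_div : Tendsto (fun ν : ℕ => Real.log ((ν:ℝ) + 1) / (ν:ℝ)) atTop (nhds 0) := by
  have h1 : Tendsto (fun ν : ℕ => (ν:ℝ) + 1) atTop atTop :=
    tendsto_atTop_add_const_right atTop 1 tendsto_natCast_atTop_atTop
  have h2 : Tendsto (fun ν : ℕ => Real.log ((ν:ℝ) + 1) / ((ν:ℝ) + 1)) atTop (nhds 0) :=
    (Real.isLittleO_log_id_atTop.tendsto_div_nhds_zero).comp h1
  have h3 : Tendsto (fun ν : ℕ => 2 * (Real.log ((ν:ℝ) + 1) / ((ν:ℝ) + 1))) atTop (nhds 0) := by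
    have := h2.const_mul (2:ℝ)
    simpa using this
  apply tendsto_of_tendsto_of_tendsto_of_le_of_le' tendsto_const_nhds h3
  · filter_upwards [eventually_ge_atTop 1] with ν hν
    have : (1:ℝ) ≤ (ν:ℝ) := by exact_mod_cast hν
    apply div_nonneg _ (by linarith)
    apply Real.log_nonneg; linarith
  · filter_upwards [eventually_ge_atTop 1] with ν hν
    have hν1 : (1:ℝ) ≤ (ν:ℝ) := by exact_mod_cast hν
    have hl : 0 ≤ Real.log ((ν:ℝ) + 1) := Real.log_nonneg (by linarith)
    have h2' : 2 * (Real.log ((ν:ℝ)+1) / ((ν:ℝ)+1)) = (2 * Real.log ((ν:ℝ)+1)) / ((ν:ℝ)+1) := by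
      ring
    rw [h2', div_le_div_iff₀ (by linarith) (by linarith)]
    nlinarith [hl, hν1]

lemma tendsto_aux (D : ℕ → ℝ) (ρ c C : ℝ) (hρ : 1 ≤ ρ) (hc : 0 < c) (hC : 0 < C)
    (h1 : ∀ ν : ℕ, 1 ≤ ν → c * ρ ^ ν / ((ν : ℝ) + 1) ^ 2 ≤ D ν)
    (h2 : ∀ ν : ℕ, 1 ≤ ν → D ν ≤ C * ρ ^ ν) :
    Tendsto (fun ν : ℕ => (1 / (2 * (ν : ℝ))) * Real.log (D ν)) atTop
      (nhds (Real.log ρ / 2)) := by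
  have hρ0 : (0:ℝ) < ρ := lt_of_lt_of_le zero_lt_one hρ
  have hL : Tendsto (fun ν : ℕ => Real.log c / (2*(ν:ℝ)) + Real.log ρ / 2
      - Real.log ((ν:ℝ)+1) / (ν:ℝ)) atTop (nhds (Real.log ρ / 2)) := by
    have t0 : Tendsto (fun ν : ℕ => Real.log c / (2*(ν:ℝ))) atTop (nhds 0) := by
      have := tendsto_const_div_atTop_nhds_zero_nat (Real.log c / 2)
      apply this.congr
      intro ν
      rw [div_div]
    have := (t0.add (tendsto_const_nhds (x := Real.log ρ / 2))).sub tendsto_log_nat_div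
    simpa using this
  have hU : Tendsto (fun ν : ℕ => Real.log C / (2*(ν:ℝ)) + Real.log ρ / 2) atTop
      (nhds (Real.log ρ / 2)) := by
    have t0 : Tendsto (fun ν : ℕ => Real.log C / (2*(ν:ℝ))) atTop (nhds 0) := by
      have := tendsto_const_div_atTop_nhds_zero_nat (Real.log C / 2)
      apply this.congr
      intro ν
      rw [div_div]
    have := t0.add (tendsto_const_nhds (x := Real.log ρ / 2))
    simpa using this
  apply tendsto_of_tendsto_of_tendsto_of_le_of_le' hL hU
  · filter_upwards [eventually_ge_atTop 1] with ν hν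
    have hν1 : (1:ℝ) ≤ (ν:ℝ) := by exact_mod_cast hν
    have hν0 : (0:ℝ) < (ν:ℝ) := by linarith
    have hlow := h1 ν hν
    have hlowpos : 0 < c * ρ ^ ν / ((ν : ℝ) + 1) ^ 2 := by positivity
    have hlog : Real.log (c * ρ ^ ν / ((ν : ℝ) + 1) ^ 2) ≤ Real.log (D ν) :=
      Real.log_le_log (by positivity) hlow
    have hexp : Real.log (c * ρ ^ ν / ((ν : ℝ) + 1) ^ 2)
        = Real.log c + (ν:ℝ) * Real.log ρ - 2 * Real.log ((ν:ℝ)+1) := by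
      rw [Real.log_div (by positivity) (by positivity),
        Real.log_mul (ne_of_gt hc) (by positivity), Real.log_pow, Real.log_pow]
      norm_num
    rw [hexp] at hlog
    have e : Real.log c / (2*(ν:ℝ)) + Real.log ρ / 2 - Real.log ((ν:ℝ)+1) / (ν:ℝ)
        = (1 / (2 * (ν:ℝ))) * (Real.log c + (ν:ℝ) * Real.log ρ - 2 * Real.log ((ν:ℝ)+1)) := by
      field_simp
      try ring
    rw [e]
    apply mul_le_mul_of_nonneg_left hlog (by positivity)
  · filter_upwards [eventually_ge_atTop 1] with ν hν
    have hν1 : (1:ℝ) ≤ (ν:ℝ) := by exact_mod_cast hν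
    have hν0 : (0:ℝ) < (ν:ℝ) := by linarith
    have hup := h2 ν hν
    have hlog : Real.log (D ν) ≤ Real.log (C * ρ ^ ν) := by
      apply Real.log_le_log _ hup
      calc (0:ℝ) < c * ρ ^ ν / ((ν : ℝ) + 1) ^ 2 := by positivity
        _ ≤ D ν := h1 ν hν
    have hexp : Real.log (C * ρ ^ ν) = Real.log C + (ν:ℝ) * Real.log ρ := by
      rw [Real.log_mul (ne_of_gt hC) (by positivity), Real.log_pow]
    rw [hexp] at hlog
    have e : Real.log C / (2*(ν:ℝ)) + Real.log ρ / 2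
        = (1 / (2 * (ν:ℝ))) * (Real.log C + (ν:ℝ) * Real.log ρ) := by
      field_simp
      try ring
    rw [e]
    apply mul_le_mul_of_nonneg_left hlog (by positivity)


/-- The limiting intensive free energy of adsorbing Dyck paths: it equals `log 2` for
`0 < z ≤ 2` and `log z − (1/2)·log(z−1)` for `z > 2`. -/
theorem dyck_free_energy (z : ℝ) (hz : 0 < z) :
    (z ≤ 2 → Tendsto (fun ν : ℕ => (1 / (2 * (ν : ℝ))) * Real.log (Dp ν z)) atTop
      (nhds (Real.log 2))) ∧
    (2 < z → Tendsto (fun ν : ℕ => (1 / (2 * (ν : ℝ))) * Real.log (Dp ν z)) atTop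
      (nhds (Real.log z - (1 / 2) * Real.log (z - 1)))) := by
  constructor
  · intro hz2
    -- get a uniform catalan lower bound constant
    have hmain : ∃ c : ℝ, 0 < c ∧ ∀ ν : ℕ, 1 ≤ ν → c * KK ν ≤ Dp ν z := by
      rcases le_or_gt z (7/10) with h7 | h7
      · refine ⟨z * (1 - (5/4) * z) / (4 * (1 - z)), ?_, ?_⟩
        · apply div_pos (by nlinarith) (by nlinarith)
        · intro ν hν
          exact (Dp_lower_small ν z hz h7 hν).1
      · rcases le_or_gt z 1 with h1 | h1
        · exact ⟨3 * z - 2, by nlinarith, fun ν _ => Dp_lower_pair ν z (by linarith) h1⟩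
        · exact ⟨1, one_pos, fun ν _ => by
            simpa using Dp_lower_mid ν z (le_of_lt h1) hz2⟩
    obtain ⟨c, hc, hcb⟩ := hmain
    have key := tendsto_aux (fun ν => Dp ν z) 4 (c/2) 1 (by norm_num) (by linarith) one_pos
      (fun ν hν => by
        calc c/2 * 4 ^ ν / ((ν : ℝ) + 1) ^ 2 = c * (4 ^ ν / (2 * ((ν:ℝ) + 1) ^ 2)) := by
              have hne : ((ν:ℝ) + 1) ≠ 0 := by positivity
              field_simp
              try ring
          _ ≤ c * KK ν := by
              apply mul_le_mul_of_nonneg_left (KK_lower ν) hc.le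
          _ ≤ Dp ν z := hcb ν hν)
      (fun ν _ => by simpa using Dp_upper ν z hz.le hz2)
    have hlog4 : Real.log 4 / 2 = Real.log 2 := by
      rw [show (4:ℝ) = 2^2 by norm_num, Real.log_pow]
      push_cast
      try ring
    rw [hlog4] at key
    exact key
  · intro hz2
    set Q : ℝ := z ^ 2 / (z - 1) with hQ
    have hz1 : (0:ℝ) < z - 1 := by linarith
    have hQ4 : (4:ℝ) ≤ Q := by
      rw [hQ, le_div_iff₀ hz1]
      nlinarith
    have hQpos : (0:ℝ) < Q := by linarith
    have hlowc : (0:ℝ) < (z - 2) / (2 * (z - 1)) := by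
      apply div_pos (by linarith) (by linarith)
    have hDlow : ∀ ν : ℕ, (z - 2) / (2 * (z - 1)) * Q ^ ν ≤ Dp ν z := by
      intro ν
      have hDT := DT ν z
      obtain ⟨hT1, _⟩ := Tp_bounds ν z hz2
      have hCB : (0:ℝ) ≤ (Nat.choose (2 * ν) ν : ℝ) := Nat.cast_nonneg _
      -- (z-1) Dp = (z-2) Tp + CB ≥ (z-2) Q^ν/2
      have h5 : (z - 2) * (Q ^ ν / 2) ≤ (z - 1) * Dp ν z := by
        have : (z - 2) * (Q ^ ν / 2) ≤ (z - 2) * Tp ν z := by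
          apply mul_le_mul_of_nonneg_left _ (by linarith)
          linarith
        linarith
      rw [div_mul_eq_mul_div, div_le_iff₀ (by linarith : (0:ℝ) < 2 * (z - 1))]
      nlinarith [h5]
    have hDup : ∀ ν : ℕ, Dp ν z ≤ Q ^ ν := by
      intro ν
      have hDT := DT ν z
      obtain ⟨_, hT2⟩ := Tp_bounds ν z hz2
      have hCB := choose_le_four_pow ν
      have h4Q : (4:ℝ) ^ ν ≤ Q ^ ν := pow_le_pow_left₀ (by norm_num) hQ4 ν
      have h6 : (z - 1) * Dp ν z ≤ (z - 2) * Q ^ ν + Q ^ ν := by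
        have : (z - 2) * Tp ν z ≤ (z - 2) * Q ^ ν := by
          apply mul_le_mul_of_nonneg_left hT2 (by linarith)
        linarith
      nlinarith [h6]
    have key := tendsto_aux (fun ν => Dp ν z) Q ((z - 2) / (2 * (z - 1))) 1
      (by linarith) hlowc one_pos
      (fun ν _ => by
        calc (z - 2) / (2 * (z - 1)) * Q ^ ν / ((ν : ℝ) + 1) ^ 2
            ≤ (z - 2) / (2 * (z - 1)) * Q ^ ν := by
              apply div_le_self _ _
              · positivity
              · nlinarith [Nat.cast_nonneg (α := ℝ) ν]
          _ ≤ Dp ν z := hDlow ν)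
      (fun ν _ => by simpa using hDup ν)
    have hval : Real.log Q / 2 = Real.log z - (1/2) * Real.log (z - 1) := by
      rw [hQ, Real.log_div (by positivity) (by linarith), Real.log_pow]
      push_cast
      try ring
    rw [hval] at key
    exact key
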